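/- Let {χ_γ}_{γ∈ℤᵈ} be indicators of sets with finite overlap constant N, let A be a bounded positivity-preserving operator on L²(ℝᵈ), and let {T_γ} be bounded operators with sup_γ ‖T_γ‖ =: M < ∞. Then the positively homogeneous map ψ ↦ ∑_γ χ_γ · A(|T_γ(χ_γ ψ)|), defined on compactly supported functions, extends by continuity to a bounded map on L²(ℝᵈ) satisfying ‖Γ̂_A(T)ψ‖ ≤ C·N·‖A‖·M·‖ψ‖ for a universal constant C, and moreover |Γ̂_A(T)(ψ₁) - Γ̂_A(T)(ψ₂)| ≤ Γ̂_A(T)(ψ₁-ψ₂) pointwise. -/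

import Mathlib

open MeasureTheory Filter ENNReal

noncomputable section

abbrev Ed (d : ℕ) := EuclideanSpace ℝ (Fin d)
abbrev L2r (d : ℕ) := Lp ℝ 2 (volume : Measure (Ed d))

/-! Write `g_γ ψ = A|T_γ(χ_γ ψ)|`, so that `Γ̂_A(T)ψ = ∑_γ χ_γ g_γ ψ` and
`‖g_γ ψ‖ ≤ ‖A‖ M ‖χ_γ ψ‖`. Pointwise, the weighted Cauchy–Schwarz inequality and the overlap
bound give `(∑_γ χ_γ |g_γ|)² ≤ N ∑_γ χ_γ |g_γ|²`; integrating,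
`‖Γ̂_A(T)ψ‖² ≤ N ∑_γ ‖g_γ ψ‖² ≤ N (‖A‖ M)² ∑_γ ‖χ_γ ψ‖² ≤ (N ‖A‖ M ‖ψ‖)²`, so `C = 1` works.
Since `A` is positivity preserving it is monotone, hence `|A|u| - A|v|| ≤ A|u - v|`; applied to
`u = T_γ(χ_γ ψ₁)`, `v = T_γ(χ_γ ψ₂)` and summed over the finitely many `γ` with `x ∈ s γ`, this
gives the pointwise Lipschitz bound. -/

theorem ENNReal.two_mul_le_add_sq (a b : ℝ≥0∞) : 2 * a * b ≤ a ^ 2 + b ^ 2 := by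
  rcases eq_or_ne a ∞ with rfl | ha
  · simp
  rcases eq_or_ne b ∞ with rfl | hb
  · simp
  lift a to NNReal using ha
  lift b to NNReal using hb
  exact_mod_cast _root_.two_mul_le_add_sq a b

theorem ENNReal.tsum_tsum_mul {ι κ : Type*} (f : ι → ℝ≥0∞) (g : κ → ℝ≥0∞) :
    ∑' i, ∑' j, f i * g j = (∑' i, f i) * ∑' j, g j := by
  simp_rw [ENNReal.tsum_mul_left, ENNReal.tsum_mul_right]

theorem ENNReal.tsum_mul_sq_le {ι : Type*} (c v : ι → ℝ≥0∞) :
    (∑' i, c i * v i) ^ 2 ≤ (∑' i, c i) * ∑' i, c i * v i ^ 2 := by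
  refine (ENNReal.mul_le_mul_iff_right two_ne_zero ofNat_ne_top).1 ?_
  calc 2 * (∑' i, c i * v i) ^ 2 = ∑' i, ∑' j, c i * c j * (2 * v i * v j) := by
        rw [sq, ← ENNReal.tsum_tsum_mul, ← ENNReal.tsum_mul_left]
        refine tsum_congr fun i => ?_
        rw [← ENNReal.tsum_mul_left]
        exact tsum_congr fun j => by ring
    _ ≤ ∑' i, ∑' j, c i * c j * (v i ^ 2 + v j ^ 2) := by
        gcongr with i j
        exact ENNReal.two_mul_le_add_sq _ _
    _ = ∑' i, ∑' j, (c i * v i ^ 2) * c j + ∑' i, ∑' j, c i * (c j * v j ^ 2) := by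
        rw [← ENNReal.tsum_add]
        refine tsum_congr fun i => ?_
        rw [← ENNReal.tsum_add]
        exact tsum_congr fun j => by ring
    _ = 2 * ((∑' i, c i) * ∑' i, c i * v i ^ 2) := by
        rw [ENNReal.tsum_tsum_mul, ENNReal.tsum_tsum_mul]
        ring

theorem sq_eLpNorm_two {α E : Type*} [MeasurableSpace α] [ENorm E] (μ : Measure α) (f : α → E) :
    eLpNorm f 2 μ ^ 2 = ∫⁻ x, ‖f x‖ₑ ^ 2 ∂μ := by
  have h := eLpNorm_nnreal_eq_lintegral (f := f) (μ := μ) (p := 2) two_ne_zero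
  simp only [NNReal.coe_ofNat, ENNReal.coe_ofNat] at h
  rw [h, ← ENNReal.rpow_natCast, ← ENNReal.rpow_mul]
  norm_num

theorem indicator_one_mul_apply {α R : Type*} [MulZeroOneClass R] (s : Set α) (f : α → R)
    (x : α) : s.indicator (fun _ => (1 : R)) x * f x = s.indicator f x := by
  simpa using (Set.indicator_mul_left s (fun _ => (1 : R)) f).symm

section Gluing

variable {α ι : Type*} {s : ι → Set α} {N : NNReal}

def HasOverlapBound (s : ι → Set α) (N : NNReal) : Prop :=
  ∀ x, ∑' i, (s i).indicator (fun _ => (1 : ℝ≥0∞)) x ≤ N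

theorem HasOverlapBound.finite_setOf_mem (hN : HasOverlapBound s N) (x : α) :
    {i | x ∈ s i}.Finite :=
  (ENNReal.finite_const_le_of_tsum_ne_top ((hN x).trans_lt coe_lt_top).ne one_ne_zero).subset
    fun i (hi : x ∈ s i) => (Set.indicator_of_mem hi (fun _ => (1 : ℝ≥0∞))).ge

theorem tsum_indicator_one_mul_eq_sum {R : Type*} [NonAssocSemiring R] [TopologicalSpace R]
    {x : α} (hx : {i | x ∈ s i}.Finite) (f : ι → R) :
    ∑' i, (s i).indicator (fun _ => (1 : R)) x * f i = ∑ i ∈ hx.toFinset, f i := by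
  rw [tsum_eq_sum (s := hx.toFinset) fun i hi => ?_]
  · refine Finset.sum_congr rfl fun i hi => ?_
    have hxi : x ∈ s i := hx.mem_toFinset.1 hi
    rw [Set.indicator_of_mem hxi, one_mul]
  · rw [Set.indicator_of_notMem (by simpa using hi), zero_mul]

def glue (s : ι → Set α) (g : ι → α → ℝ) (x : α) : ℝ :=
  ∑' i, (s i).indicator (fun _ => 1) x * g i x

theorem abs_glue_sub_glue_le (hN : HasOverlapBound s N) {g₁ g₂ g₃ : ι → α → ℝ} {x : α}
    (h : ∀ i, |g₁ i x - g₂ i x| ≤ g₃ i x) : |glue s g₁ x - glue s g₂ x| ≤ glue s g₃ x := by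
  have hfin := hN.finite_setOf_mem x
  simp only [glue, tsum_indicator_one_mul_eq_sum hfin, ← Finset.sum_sub_distrib]
  exact (Finset.abs_sum_le_sum_abs _ _).trans (Finset.sum_le_sum fun i _ => h i)

theorem enorm_glue_le (g : ι → α → ℝ) (x : α) :
    ‖glue s g x‖ₑ ≤ ∑' i, (s i).indicator (fun _ => 1) x * ‖g i x‖ₑ := by
  refine enorm_tsum_le_tsum_enorm.trans (ENNReal.tsum_le_tsum fun i => ?_)
  rw [enorm_mul]
  by_cases hx : x ∈ s i <;> simp [hx]

variable [MeasurableSpace α] {μ : Measure α} [Countable ι]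

theorem measurable_glue (hs : ∀ i, MeasurableSet (s i)) {g : ι → α → ℝ}
    (hg : ∀ i, Measurable (g i)) : Measurable (glue s g) :=
  Measurable.tsum fun i => (measurable_const.indicator (hs i)).mul (hg i)

theorem tsum_setLIntegral_le (hs : ∀ i, MeasurableSet (s i)) (hN : HasOverlapBound s N)
    {f : α → ℝ≥0∞} (hf : AEMeasurable f μ) :
    ∑' i, ∫⁻ x in s i, f x ∂μ ≤ N * ∫⁻ x, f x ∂μ := by
  calc ∑' i, ∫⁻ x in s i, f x ∂μ = ∫⁻ x, ∑' i, (s i).indicator (fun _ => 1) x * f x ∂μ := by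
        rw [lintegral_tsum (f := fun i x => (s i).indicator (fun _ => 1) x * f x)
          fun i => (measurable_const.indicator (hs i)).aemeasurable.mul hf]
        exact tsum_congr fun i => (lintegral_indicator (hs i) _).symm.trans
          (lintegral_congr fun x => (indicator_one_mul_apply _ _ x).symm)
    _ ≤ ∫⁻ x, N * f x ∂μ := lintegral_mono fun x => by
        rw [ENNReal.tsum_mul_right]
        gcongr
        exact hN x
    _ = N * ∫⁻ x, f x ∂μ := lintegral_const_mul' _ _ coe_ne_top

theorem sq_eLpNorm_glue_le (hs : ∀ i, MeasurableSet (s i)) (hN : HasOverlapBound s N)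
    {g : ι → α → ℝ} (hg : ∀ i, AEStronglyMeasurable (g i) μ) :
    eLpNorm (glue s g) 2 μ ^ 2 ≤ N * ∑' i, eLpNorm (g i) 2 μ ^ 2 := by
  have hmeas : ∀ i, AEMeasurable (fun x => (s i).indicator (fun _ => 1) x * ‖g i x‖ₑ ^ 2) μ :=
    fun i => (measurable_const.indicator (hs i)).aemeasurable.mul ((hg i).enorm.pow_const 2)
  calc eLpNorm (glue s g) 2 μ ^ 2 = ∫⁻ x, ‖glue s g x‖ₑ ^ 2 ∂μ := sq_eLpNorm_two μ _
    _ ≤ ∫⁻ x, (∑' i, (s i).indicator (fun _ => 1) x * ‖g i x‖ₑ) ^ 2 ∂μ :=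
        lintegral_mono fun x => pow_le_pow_left' (enorm_glue_le g x) 2
    _ ≤ ∫⁻ x, N * ∑' i, (s i).indicator (fun _ => 1) x * ‖g i x‖ₑ ^ 2 ∂μ :=
        lintegral_mono fun x => (ENNReal.tsum_mul_sq_le _ _).trans (by gcongr; exact hN x)
    _ = N * ∑' i, ∫⁻ x in s i, ‖g i x‖ₑ ^ 2 ∂μ := by
        rw [lintegral_const_mul' _ _ coe_ne_top, lintegral_tsum hmeas]
        congr 1
        exact tsum_congr fun i => (lintegral_congr fun x => indicator_one_mul_apply _ _ x).trans
          (lintegral_indicator (hs i) _)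
    _ ≤ N * ∑' i, eLpNorm (g i) 2 μ ^ 2 := by
        gcongr with i
        rw [sq_eLpNorm_two]
        exact setLIntegral_le_lintegral _ _

end Gluing

section IndicatorLp

variable {α E : Type*} [MeasurableSpace α] {μ : Measure α} [NormedAddCommGroup E]

def indicatorLp {p : ℝ≥0∞} {s : Set α} (hs : MeasurableSet s) (f : Lp E p μ) : Lp E p μ :=
  (MemLp.indicator hs (Lp.memLp f)).toLp _

theorem indicatorLp_sub {p : ℝ≥0∞} {s : Set α} (hs : MeasurableSet s) (f g : Lp E p μ) :
    indicatorLp hs (f - g) = indicatorLp hs f - indicatorLp hs g := by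
  rw [indicatorLp, indicatorLp, indicatorLp, ← MemLp.toLp_sub]
  refine MemLp.toLp_congr _ _ ?_
  filter_upwards [Lp.coeFn_sub f g] with x hx
  by_cases hxs : x ∈ s
  · simp only [Set.indicator_of_mem hxs, Pi.sub_apply, hx]
  · simp only [Set.indicator_of_notMem hxs, Pi.sub_apply, sub_self]

theorem enorm_indicatorLp {p : ℝ≥0∞} {s : Set α} (hs : MeasurableSet s) (f : Lp E p μ) :
    ‖indicatorLp hs f‖ₑ = eLpNorm f p (μ.restrict s) := by
  rw [Lp.enorm_def, indicatorLp, eLpNorm_congr_ae (MemLp.coeFn_toLp _),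
    eLpNorm_indicator_eq_eLpNorm_restrict hs]

variable {ι : Type*} [Countable ι] {s : ι → Set α} {N : NNReal}

theorem tsum_sq_enorm_indicatorLp_le (hs : ∀ i, MeasurableSet (s i)) (hN : HasOverlapBound s N)
    (f : Lp E 2 μ) : ∑' i, ‖indicatorLp (hs i) f‖ₑ ^ 2 ≤ N * ‖f‖ₑ ^ 2 := by
  simp_rw [enorm_indicatorLp, Lp.enorm_def, sq_eLpNorm_two]
  exact tsum_setLIntegral_le hs hN ((Lp.aestronglyMeasurable f).enorm.pow_const 2)

theorem eLpNorm_glue_le (hs : ∀ i, MeasurableSet (s i)) (hN : HasOverlapBound s N)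
    {g : ι → Lp ℝ 2 μ} {f : Lp E 2 μ} {K : ℝ} (hK : 0 ≤ K)
    (hg : ∀ i, ‖g i‖ ≤ K * ‖indicatorLp (hs i) f‖) :
    eLpNorm (glue s fun i => g i) 2 μ ≤ ENNReal.ofReal (N * K * ‖f‖) := by
  have hg' : ∀ i, ‖g i‖ₑ ≤ ENNReal.ofReal K * ‖indicatorLp (hs i) f‖ₑ := fun i => by
    rw [← ofReal_norm, ← ofReal_norm, ← ENNReal.ofReal_mul hK]
    exact ENNReal.ofReal_le_ofReal (hg i)
  rw [← ENNReal.pow_le_pow_left_iff two_ne_zero]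
  calc eLpNorm (glue s fun i => g i) 2 μ ^ 2 ≤ N * ∑' i, ‖g i‖ₑ ^ 2 := by
        simpa only [Lp.enorm_def] using
          sq_eLpNorm_glue_le hs hN fun i => Lp.aestronglyMeasurable (g i)
    _ ≤ N * ∑' i, ENNReal.ofReal K ^ 2 * ‖indicatorLp (hs i) f‖ₑ ^ 2 := by
        gcongr with i
        rw [← mul_pow]
        exact pow_le_pow_left' (hg' i) 2
    _ ≤ N * (ENNReal.ofReal K ^ 2 * (N * ‖f‖ₑ ^ 2)) := by
        rw [ENNReal.tsum_mul_left]
        gcongr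
        exact tsum_sq_enorm_indicatorLp_le hs hN f
    _ = ENNReal.ofReal (N * K * ‖f‖) ^ 2 := by
        rw [ENNReal.ofReal_mul (by positivity), ENNReal.ofReal_mul (by positivity), ofReal_norm,
          ofReal_coe_nnreal]
        ring

theorem memLp_glue (hs : ∀ i, MeasurableSet (s i)) (hN : HasOverlapBound s N)
    {g : ι → Lp ℝ 2 μ} {f : Lp E 2 μ} {K : ℝ} (hK : 0 ≤ K)
    (hg : ∀ i, ‖g i‖ ≤ K * ‖indicatorLp (hs i) f‖) : MemLp (glue s fun i => g i) 2 μ :=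
  ⟨(measurable_glue hs fun i => (Lp.stronglyMeasurable (g i)).measurable).aestronglyMeasurable,
    (eLpNorm_glue_le hs hN hK hg).trans_lt ofReal_lt_top⟩

theorem norm_toLp_glue_le (hs : ∀ i, MeasurableSet (s i)) (hN : HasOverlapBound s N)
    {g : ι → Lp ℝ 2 μ} {f : Lp E 2 μ} {K : ℝ} (hK : 0 ≤ K)
    (hg : ∀ i, ‖g i‖ ≤ K * ‖indicatorLp (hs i) f‖) :
    ‖(memLp_glue hs hN hK hg).toLp‖ ≤ N * K * ‖f‖ := by
  rw [Lp.norm_toLp]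
  exact ENNReal.toReal_le_of_le_ofReal (by positivity) (eLpNorm_glue_le hs hN hK hg)

end IndicatorLp

theorem abs_sub_map_abs_le {E F Φ : Type*} [AddCommGroup E] [Lattice E] [IsOrderedAddMonoid E]
    [AddCommGroup F] [Lattice F] [IsOrderedAddMonoid F] [FunLike Φ E F] [AddMonoidHomClass Φ E F]
    {A : Φ} (hA : Monotone A) (u v : E) : |A (|u|) - A (|v|)| ≤ A |u - v| := by
  rw [← map_sub]
  refine abs_le'.2 ⟨hA ((le_abs_self _).trans (abs_abs_sub_abs_le u v)), ?_⟩
  rw [← map_neg, neg_sub, abs_sub_comm u v]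
  exact hA ((le_abs_self _).trans (abs_abs_sub_abs_le v u))

theorem MeasureTheory.Lp.ae_abs_sub_le {α : Type*} [MeasurableSpace α] {μ : Measure α}
    {p : ℝ≥0∞} {f g h : Lp ℝ p μ} (hle : |f - g| ≤ h) : ∀ᵐ x ∂μ, |f x - g x| ≤ h x := by
  filter_upwards [(Lp.coeFn_le _ _).2 hle, Lp.coeFn_abs (f - g), Lp.coeFn_sub f g]
    with x hx habs hsub
  rwa [habs, hsub] at hx

/-- Lemma 2 of the paper: for a positivity preserving bounded operator `A` and
uniformly bounded operators `T γ` together with indicators of sets with finite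
overlap `N`, the positively homogeneous map `ψ ↦ ∑_γ χ_γ A|T_γ(χ_γ ψ)|` extends by
continuity to a bounded map on `L²` with `‖Γ̂_A(T)ψ‖ ≤ C N ‖A‖ M ‖ψ‖`, and it
satisfies `|Γ̂_A(T)ψ₁ - Γ̂_A(T)ψ₂| ≤ Γ̂_A(T)(ψ₁-ψ₂)` pointwise. -/
theorem glued_abs_operator_bounded (d : ℕ) (s : (Fin d → ℤ) → Set (Ed d))
    (hs : ∀ γ, MeasurableSet (s γ))
    (N : NNReal)
    (hN : ∀ x : Ed d, ∑' γ : Fin d → ℤ, (s γ).indicator (fun _ => (1 : ℝ≥0∞)) x ≤ N)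
    (A : L2r d →L[ℝ] L2r d) (hA : ∀ ψ : L2r d, 0 ≤ ψ → 0 ≤ A ψ)
    (T : (Fin d → ℤ) → (L2r d →L[ℝ] L2r d))
    (M : ℝ) (hM : ∀ γ, ‖T γ‖ ≤ M) :
    ∃ C : ℝ, 0 < C ∧ ∃ G : L2r d → L2r d,
      (∀ ψ : L2r d, ∀ᵐ x : Ed d, (G ψ : Ed d → ℝ) x =
        ∑' γ : Fin d → ℤ, (s γ).indicator (fun _ => (1 : ℝ)) x *
          (A |T γ (MemLp.toLp ((s γ).indicator ψ)
            (MemLp.indicator (hs γ) (Lp.memLp ψ)))| : Ed d → ℝ) x) ∧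
      (∀ ψ : L2r d, ‖G ψ‖ ≤ C * N * ‖A‖ * M * ‖ψ‖) ∧
      (∀ ψ₁ ψ₂ : L2r d, ∀ᵐ x : Ed d,
        |(G ψ₁ : Ed d → ℝ) x - (G ψ₂ : Ed d → ℝ) x| ≤ (G (ψ₁ - ψ₂) : Ed d → ℝ) x) := by
  let g (ψ : L2r d) (γ : Fin d → ℤ) : L2r d := A |T γ (indicatorLp (hs γ) ψ)|
  have hK : 0 ≤ ‖A‖ * M := mul_nonneg (norm_nonneg A) ((norm_nonneg _).trans (hM 0))
  have hg (ψ : L2r d) (γ : Fin d → ℤ) : ‖g ψ γ‖ ≤ ‖A‖ * M * ‖indicatorLp (hs γ) ψ‖ :=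
    calc ‖g ψ γ‖ ≤ ‖A‖ * ‖T γ (indicatorLp (hs γ) ψ)‖ := by
          simpa only [norm_abs_eq_norm] using A.le_opNorm |T γ (indicatorLp (hs γ) ψ)|
      _ ≤ ‖A‖ * (M * ‖indicatorLp (hs γ) ψ‖) := by
          gcongr
          exact (T γ).le_of_opNorm_le (hM γ) _
      _ = ‖A‖ * M * ‖indicatorLp (hs γ) ψ‖ := (mul_assoc _ _ _).symm
  have hmem (ψ : L2r d) := memLp_glue hs hN hK (hg ψ)
  refine ⟨1, one_pos, fun ψ => (hmem ψ).toLp, fun ψ => (hmem ψ).coeFn_toLp, fun ψ => ?_,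
    fun ψ₁ ψ₂ => ?_⟩
  · simpa only [one_mul, mul_assoc] using norm_toLp_glue_le hs hN hK (hg ψ)
  · have hle (γ : Fin d → ℤ) : |g ψ₁ γ - g ψ₂ γ| ≤ g (ψ₁ - ψ₂) γ := by
      simpa only [g, indicatorLp_sub, map_sub] using
        abs_sub_map_abs_le ((monotone_iff_map_nonneg A).2 hA) (T γ (indicatorLp (hs γ) ψ₁))
          (T γ (indicatorLp (hs γ) ψ₂))
    filter_upwards [(hmem ψ₁).coeFn_toLp, (hmem ψ₂).coeFn_toLp, (hmem (ψ₁ - ψ₂)).coeFn_toLp,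
      ae_all_iff.2 fun γ => Lp.ae_abs_sub_le (hle γ)] with x h₁ h₂ h₃ hx
    rw [h₁, h₂, h₃]
    exact abs_glue_sub_glue_le hN hx
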